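/- arXiv:2406.09651 — 4 statements merged into one kernel-verified Lean document; each statement's English description precedes it below -/
import Mathlib

section
/- Let $X = \mathbb{R}^2$ with the usual topology, $C = \{(x,y) : y \le 0\} \cup \{(x,y) : x = 0, y \ge 0\}$, and $A = \{(x,y) : y \le 0\}$. Then $C \setminus A$ is nowhere dense in $\mathbb{R}^2$, but $A$ is not residual in $C$ with respect to the subspace topology on $C$. -/
theorem stmt_2 :
    IsNowhereDense (({p : ℝ × ℝ | p.2 ≤ 0} ∪ {p : ℝ × ℝ | p.1 = 0 ∧ 0 ≤ p.2}) \
      {p : ℝ × ℝ | p.2 ≤ 0}) ∧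
    ¬ ((Subtype.val ⁻¹' {p : ℝ × ℝ | p.2 ≤ 0} :
        Set ({p : ℝ × ℝ | p.2 ≤ 0} ∪ {p : ℝ × ℝ | p.1 = 0 ∧ 0 ≤ p.2} : Set (ℝ × ℝ))) ∈
      residual ({p : ℝ × ℝ | p.2 ≤ 0} ∪ {p : ℝ × ℝ | p.1 = 0 ∧ 0 ≤ p.2} : Set (ℝ × ℝ))) := by
  have hAclosed : IsClosed {p : ℝ × ℝ | p.2 ≤ 0} :=
    isClosed_le continuous_snd continuous_const
  have hBclosed : IsClosed {p : ℝ × ℝ | p.1 = 0 ∧ 0 ≤ p.2} := by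
    have : {p : ℝ × ℝ | p.1 = 0 ∧ 0 ≤ p.2} =
        {p : ℝ × ℝ | p.1 = 0} ∩ {p : ℝ × ℝ | 0 ≤ p.2} := rfl
    rw [this]
    exact (isClosed_eq continuous_fst continuous_const).inter
      (isClosed_le continuous_const continuous_snd)
  have hCclosed : IsClosed ({p : ℝ × ℝ | p.2 ≤ 0} ∪ {p : ℝ × ℝ | p.1 = 0 ∧ 0 ≤ p.2}) :=
    hAclosed.union hBclosed
  constructor
  · -- nowhere dense: subset of the line {p.1 = 0}
    have hline : IsNowhereDense {p : ℝ × ℝ | p.1 = 0} := by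
      have hcl : IsClosed {p : ℝ × ℝ | p.1 = 0} := isClosed_eq continuous_fst continuous_const
      rw [hcl.isNowhereDense_iff]
      have : {p : ℝ × ℝ | p.1 = 0} = ({0} : Set ℝ) ×ˢ (Set.univ : Set ℝ) := by
        ext p; simp [Set.mem_prod, Prod.ext_iff, eq_comm]
      rw [this, interior_prod_eq, interior_singleton]
      simp
    have hsub : (({p : ℝ × ℝ | p.2 ≤ 0} ∪ {p : ℝ × ℝ | p.1 = 0 ∧ 0 ≤ p.2}) \
        {p : ℝ × ℝ | p.2 ≤ 0}) ⊆ {p : ℝ × ℝ | p.1 = 0} := by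
      rintro p ⟨hp, hpn⟩
      rcases hp with h | h
      · exact absurd h hpn
      · exact h.1
    have hmono := interior_mono (closure_mono hsub)
    rw [hline] at hmono
    exact Set.eq_empty_of_subset_empty hmono
  · intro hres
    haveI : CompleteSpace ({p : ℝ × ℝ | p.2 ≤ 0} ∪ {p : ℝ × ℝ | p.1 = 0 ∧ 0 ≤ p.2} : Set (ℝ × ℝ)) :=
      hCclosed.completeSpace_coe
    have hdense := dense_of_mem_residual hres
    have hcl : IsClosed (Subtype.val ⁻¹' {p : ℝ × ℝ | p.2 ≤ 0} :
        Set ({p : ℝ × ℝ | p.2 ≤ 0} ∪ {p : ℝ × ℝ | p.1 = 0 ∧ 0 ≤ p.2} : Set (ℝ × ℝ))) :=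
      hAclosed.preimage continuous_subtype_val
    have hx : (((0 : ℝ), (1 : ℝ)) : ℝ × ℝ) ∈
        ({p : ℝ × ℝ | p.2 ≤ 0} ∪ {p : ℝ × ℝ | p.1 = 0 ∧ 0 ≤ p.2}) := by
      right; constructor <;> norm_num
    have := hdense.closure_eq ▸ hcl.closure_eq
    have hmem : (⟨((0 : ℝ), (1 : ℝ)), hx⟩ :
        ({p : ℝ × ℝ | p.2 ≤ 0} ∪ {p : ℝ × ℝ | p.1 = 0 ∧ 0 ≤ p.2} : Set (ℝ × ℝ))) ∈
        (Subtype.val ⁻¹' {p : ℝ × ℝ | p.2 ≤ 0}) := by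
      rw [← hcl.closure_eq, hdense.closure_eq]; trivial
    simp only [Set.mem_preimage, Set.mem_setOf_eq] at hmem
    norm_num at hmem
end

section
/- Let $E$, $F$ be Banach spaces, $H$ a Hilbert space, and $T : E \to H$, $S : F \to H$ bounded linear operators such that the image of $S$ is closed and the orthogonal projection of the image of $T$ onto the orthogonal complement of the image of $S$ is closed in that orthogonal complement. Then the sum operator $T \oplus S : E \times F \to H$, $(x,y) \mapsto T(x) + S(y)$, is surjective if and only if $(\operatorname{Im} T)^{\perp} \cap (\operatorname{Im} S)^{\perp} = \{0\}$. -/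
/-!
The range of `(x, y) ↦ T x + S y` is `range T ⊔ range S`. Since `range S` is closed, it is the
kernel of the orthogonal projection `P` onto `(range S)ᗮ`, so `range T ⊔ range S` is the preimage
under `P` of the closed set `P (range T)` and hence closed. For a closed subspace `K`, `K = ⊤` iff
`Kᗮ = ⊥`, and `(range T ⊔ range S)ᗮ = (range T)ᗮ ⊓ (range S)ᗮ`.
-/

namespace Submodule

variable {𝕜 H : Type*} [RCLike 𝕜] [NormedAddCommGroup H] [InnerProductSpace 𝕜 H] [CompleteSpace H]

theorem ker_orthogonalProjectionOnto_orthogonal {W : Submodule 𝕜 H} (hW : IsClosed (W : Set H)) :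
    Wᗮ.orthogonalProjectionOnto.ker = W := by
  rw [ker_orthogonalProjectionOnto, orthogonal_orthogonal_eq_closure,
    hW.submodule_topologicalClosure_eq]

theorem isClosed_sup_of_isClosed_image_orthogonalProjectionOnto {U W : Submodule 𝕜 H}
    (hW : IsClosed (W : Set H)) (hU : IsClosed (Wᗮ.orthogonalProjectionOnto '' U)) :
    IsClosed ((U ⊔ W : Submodule 𝕜 H) : Set H) := by
  rw [← ker_orthogonalProjectionOnto_orthogonal hW, ← comap_map_eq, comap_coe, map_coe]
  exact hU.preimage Wᗮ.orthogonalProjectionOnto.continuous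

end Submodule

theorem stmt_5_general {E F H : Type*}
    [NormedAddCommGroup E] [NormedSpace ℝ E]
    [NormedAddCommGroup F] [NormedSpace ℝ F]
    [NormedAddCommGroup H] [InnerProductSpace ℝ H] [CompleteSpace H]
    (T : E →L[ℝ] H) (S : F →L[ℝ] H)
    (hS : IsClosed (Set.range S))
    (hproj : IsClosed ((fun x => Submodule.orthogonalProjectionOnto (LinearMap.range (S : F →ₗ[ℝ] H))ᗮ x) ''
      (Set.range T))) :
    Function.Surjective (fun p : E × F => T p.1 + S p.2) ↔
      (LinearMap.range (T : E →ₗ[ℝ] H))ᗮ ⊓ (LinearMap.range (S : F →ₗ[ℝ] H))ᗮ = ⊥ := by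
  have hK : IsClosed ((LinearMap.range (T : E →ₗ[ℝ] H) ⊔ LinearMap.range (S : F →ₗ[ℝ] H) :
      Submodule ℝ H) : Set H) :=
    Submodule.isClosed_sup_of_isClosed_image_orthogonalProjectionOnto
      (by rwa [LinearMap.coe_range])
      (by simpa only [LinearMap.coe_range, ContinuousLinearMap.coe_coe] using hproj)
  have : CompleteSpace (LinearMap.range (T : E →ₗ[ℝ] H) ⊔ LinearMap.range (S : F →ₗ[ℝ] H) :
      Submodule ℝ H) := hK.completeSpace_coe
  rw [Submodule.inf_orthogonal, Submodule.orthogonal_eq_bot_iff, ← LinearMap.range_coprod,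
    LinearMap.range_eq_top]
  rfl

theorem stmt_5 {E F H : Type*}
    [NormedAddCommGroup E] [NormedSpace ℝ E] [CompleteSpace E]
    [NormedAddCommGroup F] [NormedSpace ℝ F] [CompleteSpace F]
    [NormedAddCommGroup H] [InnerProductSpace ℝ H] [CompleteSpace H]
    (T : E →L[ℝ] H) (S : F →L[ℝ] H)
    (hS : IsClosed (Set.range S))
    (hproj : IsClosed ((fun x => Submodule.orthogonalProjectionOnto (LinearMap.range (S : F →ₗ[ℝ] H))ᗮ x) ''
      (Set.range T))) :
    Function.Surjective (fun p : E × F => T p.1 + S p.2) ↔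
      (LinearMap.range (T : E →ₗ[ℝ] H))ᗮ ⊓ (LinearMap.range (S : F →ₗ[ℝ] H))ᗮ = ⊥ :=
  stmt_5_general T S hS hproj
end

section
/- Let $X$ be a Banach manifold, $Y$ a Hilbert manifold, $V$ a Hilbert space, $A \subseteq X \times Y$ open, and $f : A \to V$ a $C^1$ map. Suppose that at every zero $(x_0, y_0)$ of $f$, the partial derivative $\partial f / \partial y (x_0, y_0) : T_{y_0} Y \to V$ is a Fredholm operator. Then $0$ is a regular value of $f$ if and only if at every zero $(x_0,y_0)$ of $f$ one has $(\operatorname{Im} \partial f/\partial x(x_0,y_0))^{\perp} \cap (\operatorname{Im} \partial f/\partial y(x_0,y_0))^{\perp} = \{0\}$ in $V$. -/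
/-!
The range of `D = df(x₀, y₀)` is `Im ∂f/∂x + Im ∂f/∂y`, so the orthogonality condition says
exactly that `Im D` is dense; in particular it follows from surjectivity. Conversely, the Fredholm
operator `∂f/∂y` has closed range of finite codimension, so the dense subspace `Im D ⊇ Im ∂f/∂y` is
closed, i.e. `D` is onto. For the kernel: by the open mapping theorem on a closed complement of its
finite-dimensional kernel, `∂f/∂y` has a continuous right inverse on its range, which extends over
the finite-dimensional cokernel to a continuous right inverse `G` of `D`; then `G ∘ D` is a
continuous projection with kernel `ker D`.
-/

open Function

namespace ContinuousLinearMap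

section Topological

variable {R M N : Type*} [Ring R] [TopologicalSpace M] [AddCommGroup M] [Module R M]
  [IsTopologicalAddGroup M] [TopologicalSpace N] [AddCommGroup N] [Module R N]

theorem HasRightInverse.closedComplemented_ker {f : M →L[R] N} (hf : f.HasRightInverse) :
    f.ker.ClosedComplemented := by
  obtain ⟨g, hg⟩ := hf
  exact (isTopCompl_range_ker_of_leftInverse g f hg).symm.closedComplemented

end Topological

section Normed

variable {𝕜 E F : Type*} [NontriviallyNormedField 𝕜]
  [NormedAddCommGroup E] [NormedSpace 𝕜 E] [NormedAddCommGroup F] [NormedSpace 𝕜 F]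

theorem HasRightInverse.of_surjective_of_closedComplemented_ker [CompleteSpace E] [CompleteSpace F]
    {f : E →L[𝕜] F} (hf : Surjective f) (hker : f.ker.ClosedComplemented) :
    f.HasRightInverse := by
  obtain ⟨p, hp⟩ := hker
  have : CompleteSpace f.ker := f.isClosed_ker.completeSpace_coe
  have hp_range : p.range = ⊤ := LinearMap.range_eq_top.mpr fun x ↦ ⟨x, hp x⟩
  let e := equivProdOfSurjectiveOfIsCompl f p (LinearMap.range_eq_top.mpr hf) hp_range
    (isTopCompl_of_proj hp).isCompl
  exact ⟨(e.symm : F × f.ker →L[𝕜] E) ∘L inl 𝕜 F f.ker,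
    fun y ↦ congrArg Prod.fst (e.apply_symm_apply (y, 0))⟩

theorem HasRightInverse.of_surjective_of_rightInverse_on [CompleteSpace 𝕜] {f : E →L[𝕜] F}
    (hf : Surjective f) {R : Submodule 𝕜 F} (hR : IsClosed (R : Set F))
    [FiniteDimensional 𝕜 (F ⧸ R)] (s : R →L[𝕜] E) (hs : ∀ r, f (s r) = r) :
    f.HasRightInverse := by
  obtain ⟨h, hh⟩ : (R.mkQL ∘L f).HasRightInverse :=
    .of_surjective_of_finiteDimensional (R.mkQ_surjective.comp hf)
  have hc : ∀ y, y - f (h (R.mkQ y)) ∈ R := fun y ↦ by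
    rw [← Submodule.Quotient.mk_eq_zero, Submodule.Quotient.mk_sub, sub_eq_zero]
    exact (hh (R.mkQ y)).symm
  refine ⟨h ∘L R.mkQL + s ∘L ((ContinuousLinearMap.id 𝕜 F - f ∘L h ∘L R.mkQL).codRestrict R hc),
    fun y ↦ ?_⟩
  rw [add_apply, map_add, comp_apply, comp_apply, hs]
  exact add_sub_cancel _ y

end Normed

section RCLike

variable {𝕜 E F : Type*} [RCLike 𝕜]
  [NormedAddCommGroup E] [NormedSpace 𝕜 E] [CompleteSpace E]
  [NormedAddCommGroup F] [NormedSpace 𝕜 F] [CompleteSpace F]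

theorem isClosed_range_of_finiteDimensional_ker_of_finiteDimensional_coker (T : E →L[𝕜] F)
    [FiniteDimensional 𝕜 T.ker] [FiniteDimensional 𝕜 (F ⧸ T.range)] :
    IsClosed (T.range : Set F) := by
  obtain ⟨E₁, hE₁, hcompl⟩ :=
    (Submodule.ClosedComplemented.of_finiteDimensional T.ker).exists_isClosed_isCompl
  have : CompleteSpace E₁ := hE₁.completeSpace_coe
  have hrange : (T ∘L E₁.subtypeL).range = T.range := by
    rw [toLinearMap_comp, LinearMap.range_comp, Submodule.toLinearMap_subtypeL,
      Submodule.range_subtype, LinearMap.range_eq_map, ← hcompl.sup_eq_top, Submodule.map_sup,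
      LinearMap.le_ker_iff_map.mp le_rfl, bot_sup_eq]
  have hker : (T ∘L E₁.subtypeL).ker = ⊥ :=
    LinearMap.ker_eq_bot.mpr (LinearMap.injective_domRestrict_iff.mpr hcompl.symm.disjoint)
  obtain ⟨G, hG⟩ := T.range.exists_isCompl
  have : FiniteDimensional 𝕜 G := (T.range.quotientEquivOfIsCompl G hG).finiteDimensional
  rw [← hrange] at hG ⊢
  exact (T ∘L E₁.subtypeL).closed_complemented_range_of_isCompl_of_ker_eq_bot G hG
    G.closed_of_finiteDimensional hker

end RCLike

section InnerProduct

variable {𝕜 X Y V : Type*} [RCLike 𝕜]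
  [NormedAddCommGroup X] [NormedSpace 𝕜 X] [NormedAddCommGroup Y] [NormedSpace 𝕜 Y]
  [NormedAddCommGroup V] [InnerProductSpace 𝕜 V]

theorem orthogonal_range_eq_inf (D : X × Y →L[𝕜] V) :
    D.rangeᗮ = (D ∘L inl 𝕜 X Y).rangeᗮ ⊓ (D ∘L inr 𝕜 X Y).rangeᗮ := by
  rw [Submodule.inf_orthogonal, ← range_coprod, coprod_comp_inl_inr]

theorem surjective_of_orthogonal_inf_eq_bot [CompleteSpace V] (D : X × Y →L[𝕜] V)
    (hclosed : IsClosed ((D ∘L inr 𝕜 X Y).range : Set V))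
    [FiniteDimensional 𝕜 (V ⧸ (D ∘L inr 𝕜 X Y).range)]
    (h : (D ∘L inl 𝕜 X Y).rangeᗮ ⊓ (D ∘L inr 𝕜 X Y).rangeᗮ = ⊥) : Surjective D := by
  have : CompleteSpace D.range :=
    (Submodule.isClosed_mono_of_finiteDimensional_quotient hclosed
      (LinearMap.range_comp_le_range _ _)).completeSpace_coe
  rw [← orthogonal_range_eq_inf, Submodule.orthogonal_eq_bot_iff] at h
  exact LinearMap.range_eq_top.mp h

theorem surjective_and_closedComplemented_ker_iff [CompleteSpace X] [CompleteSpace Y]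
    [CompleteSpace V] (D : X × Y →L[𝕜] V) [FiniteDimensional 𝕜 (D ∘L inr 𝕜 X Y).ker]
    [FiniteDimensional 𝕜 (V ⧸ (D ∘L inr 𝕜 X Y).range)] :
    Surjective D ∧ D.ker.ClosedComplemented ↔
      (D ∘L inl 𝕜 X Y).rangeᗮ ⊓ (D ∘L inr 𝕜 X Y).rangeᗮ = ⊥ := by
  refine ⟨fun ⟨hD, _⟩ ↦ ?_, fun h ↦ ?_⟩
  · rw [← orthogonal_range_eq_inf, LinearMap.range_eq_top.mpr hD, Submodule.top_orthogonal_eq_bot]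
  set Dy := D ∘L inr 𝕜 X Y
  have hclosed := isClosed_range_of_finiteDimensional_ker_of_finiteDimensional_coker Dy
  have hD := surjective_of_orthogonal_inf_eq_bot D hclosed h
  have : CompleteSpace Dy.range := hclosed.completeSpace_coe
  obtain ⟨s, hs⟩ := HasRightInverse.of_surjective_of_closedComplemented_ker
    (f := Dy.rangeRestrict) (LinearMap.surjective_rangeRestrict _)
    (LinearMap.ker_rangeRestrict (Dy : Y →ₗ[𝕜] V) ▸ .of_finiteDimensional _)
  exact ⟨hD, (HasRightInverse.of_surjective_of_rightInverse_on hD hclosed (inr 𝕜 X Y ∘L s)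
    fun r ↦ congrArg Subtype.val (hs r)).closedComplemented_ker⟩

end InnerProduct

end ContinuousLinearMap

theorem stmt_14_general {X Y V : Type*}
    [NormedAddCommGroup X] [NormedSpace ℝ X] [CompleteSpace X]
    [NormedAddCommGroup Y] [InnerProductSpace ℝ Y] [CompleteSpace Y]
    [NormedAddCommGroup V] [InnerProductSpace ℝ V] [CompleteSpace V]
    (A : Set (X × Y)) (f : X × Y → V)
    (hFred : ∀ p ∈ A, f p = 0 →
      FiniteDimensional ℝ
          (LinearMap.ker (((fderiv ℝ f p).comp (ContinuousLinearMap.inr ℝ X Y) : Y →L[ℝ] V) : Y →ₗ[ℝ] V)) ∧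
        FiniteDimensional ℝ
          (V ⧸ LinearMap.range (((fderiv ℝ f p).comp (ContinuousLinearMap.inr ℝ X Y) : Y →L[ℝ] V) : Y →ₗ[ℝ] V))) :
    (∀ p ∈ A, f p = 0 →
        Function.Surjective (fderiv ℝ f p) ∧
          (LinearMap.ker ((fderiv ℝ f p : X × Y →L[ℝ] V) : X × Y →ₗ[ℝ] V)).ClosedComplemented) ↔
      (∀ p ∈ A, f p = 0 →
        (LinearMap.range (((fderiv ℝ f p).comp (ContinuousLinearMap.inl ℝ X Y) : X →L[ℝ] V) : X →ₗ[ℝ] V))ᗮ ⊓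
            (LinearMap.range (((fderiv ℝ f p).comp (ContinuousLinearMap.inr ℝ X Y) : Y →L[ℝ] V) : Y →ₗ[ℝ] V))ᗮ =
          ⊥) := by
  refine forall₂_congr fun p hp ↦ forall_congr' fun hfp ↦ ?_
  have ⟨_, _⟩ := hFred p hp hfp
  exact ContinuousLinearMap.surjective_and_closedComplemented_ker_iff (fderiv ℝ f p)

/-- Abstract regular-value criterion (Prop. 4.7 of the paper, stated in the
linear charts): for a `C¹` map `f` on an open set `A ⊆ X × Y` with values in a
Hilbert space `V`, whose partial derivative in the `Y`-direction is Fredholm at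
every zero, `0` is a regular value of `f` (every total derivative at a zero is
surjective with complemented kernel) if and only if the "T condition"
`(Im ∂f/∂x)^⊥ ⊓ (Im ∂f/∂y)^⊥ = ⊥` holds at every zero. -/
theorem stmt_14 {X Y V : Type*}
    [NormedAddCommGroup X] [NormedSpace ℝ X] [CompleteSpace X]
    [NormedAddCommGroup Y] [InnerProductSpace ℝ Y] [CompleteSpace Y]
    [NormedAddCommGroup V] [InnerProductSpace ℝ V] [CompleteSpace V]
    (A : Set (X × Y)) (hA : IsOpen A) (f : X × Y → V)
    (hf : ContDiffOn ℝ 1 f A)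
    (hFred : ∀ p ∈ A, f p = 0 →
      FiniteDimensional ℝ
          (LinearMap.ker (((fderiv ℝ f p).comp (ContinuousLinearMap.inr ℝ X Y) : Y →L[ℝ] V) : Y →ₗ[ℝ] V)) ∧
        FiniteDimensional ℝ
          (V ⧸ LinearMap.range (((fderiv ℝ f p).comp (ContinuousLinearMap.inr ℝ X Y) : Y →L[ℝ] V) : Y →ₗ[ℝ] V))) :
    (∀ p ∈ A, f p = 0 →
        Function.Surjective (fderiv ℝ f p) ∧
          (LinearMap.ker ((fderiv ℝ f p : X × Y →L[ℝ] V) : X × Y →ₗ[ℝ] V)).ClosedComplemented) ↔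
      (∀ p ∈ A, f p = 0 →
        (LinearMap.range (((fderiv ℝ f p).comp (ContinuousLinearMap.inl ℝ X Y) : X →L[ℝ] V) : X →ₗ[ℝ] V))ᗮ ⊓
            (LinearMap.range (((fderiv ℝ f p).comp (ContinuousLinearMap.inr ℝ X Y) : Y →L[ℝ] V) : Y →ₗ[ℝ] V))ᗮ =
          ⊥) :=
  stmt_14_general A f hFred
end

section
/- Let $f : A \subseteq X \times Y \to V$ be $C^1$ with $0$ a regular value, where at each zero the partial derivative $\partial f / \partial y$ is Fredholm of index zero and the T condition holds. Then the restriction to $M = f^{-1}(0)$ of the projection $\Pi : X \times Y \to X$ is a Fredholm map of index zero, i.e., for each $(x_0,y_0) \in M$ the kernel of $d\Pi|_{T_{(x_0,y_0)}M}$ is isomorphic to $\ker(\partial f/\partial y(x_0,y_0))$ and the image $d\Pi(T_{(x_0,y_0)}M) = (\partial f/\partial x(x_0,y_0))^{-1}(\operatorname{Im} \partial f/\partial y(x_0,y_0))$ has codimension in $T_{x_0}X$ equal to the codimension of $\operatorname{Im}(\partial f/\partial y(x_0,y_0))$ in $V$. -/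
/-!
The tangent space of `M` is `K = ker (Tx ⊕ Ty)`. A vector `(0, w)` lies in `K` exactly when
`w ∈ ker Ty`, which identifies the kernel of the projection on `K`; and `x` is the first
component of some `(x, w) ∈ K` exactly when `Tx x ∈ Im Ty`. For the codimension, the map
`x ↦ [Tx x] : X → V ⧸ Im Ty` has kernel `Tx⁻¹(Im Ty)`, and it is onto because every `v ∈ V`
is `Tx x + Ty w` by surjectivity of the total derivative.
-/

namespace LinearMap

variable {R M M' N : Type*} [Ring R] [AddCommGroup M] [AddCommGroup M'] [AddCommGroup N]
  [Module R M] [Module R M'] [Module R N] (f : M →ₗ[R] N) (g : M' →ₗ[R] N)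

theorem range_fst_comp_ker_coprod :
    range ((fst R M M').comp (ker (f.coprod g)).subtype) = (range g).comap f := by
  ext x
  constructor
  · rintro ⟨⟨⟨x, y⟩, hxy⟩, rfl⟩
    exact ⟨-y, by simpa [neg_eq_iff_add_eq_zero, add_comm] using hxy⟩
  · rintro ⟨y, hy⟩
    exact ⟨⟨(x, -y), by simp [hy]⟩, rfl⟩

def kerFstCompKerCoprodEquiv :
    ker ((fst R M M').comp (ker (f.coprod g)).subtype) ≃ₗ[R] ker g where
  toFun z := ⟨(z : M × M').2, by
    obtain ⟨⟨⟨x, y⟩, hxy⟩, hx : x = 0⟩ := z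
    simpa [hx] using hxy⟩
  invFun y := ⟨⟨(0, y), by simp⟩, rfl⟩
  map_add' _ _ := rfl
  map_smul' _ _ := rfl
  left_inv := by
    rintro ⟨⟨⟨x, y⟩, hxy⟩, hx : x = 0⟩
    subst hx
    rfl
  right_inv _ := rfl

variable {f g}

theorem surjective_mkQ_comp_of_surjective_coprod (h : Function.Surjective (f.coprod g)) :
    Function.Surjective ((range g).mkQ.comp f) := by
  intro q
  obtain ⟨v, rfl⟩ := (range g).mkQ_surjective q
  obtain ⟨⟨x, y⟩, rfl⟩ := h v
  exact ⟨x, by simp⟩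

noncomputable def quotComapRangeEquivOfSurjective (h : Function.Surjective (f.coprod g)) :
    (M ⧸ (range g).comap f) ≃ₗ[R] N ⧸ range g :=
  (Submodule.quotEquivOfEq _ _ (by rw [ker_comp, Submodule.ker_mkQ])).symm.trans
    (quotKerEquivOfSurjective _ (surjective_mkQ_comp_of_surjective_coprod h))

end LinearMap

theorem stmt_16_general {X Y V : Type*}
    [NormedAddCommGroup X] [NormedSpace ℝ X]
    [NormedAddCommGroup Y] [InnerProductSpace ℝ Y]
    [NormedAddCommGroup V] [InnerProductSpace ℝ V]
    (Tx : X →L[ℝ] V) (Ty : Y →L[ℝ] V)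
    (hsurj : Function.Surjective (Tx.coprod Ty)) :
    Nonempty
        ((LinearMap.ker
            ((ContinuousLinearMap.fst ℝ X Y).comp
              (LinearMap.ker (Tx.coprod Ty : X × Y →ₗ[ℝ] V)).subtypeL).toLinearMap) ≃ₗ[ℝ]
          LinearMap.ker (Ty : Y →ₗ[ℝ] V)) ∧
      LinearMap.range
          ((ContinuousLinearMap.fst ℝ X Y).comp
            (LinearMap.ker (Tx.coprod Ty : X × Y →ₗ[ℝ] V)).subtypeL).toLinearMap =
        Submodule.comap (Tx : X →ₗ[ℝ] V) (LinearMap.range (Ty : Y →ₗ[ℝ] V)) ∧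
      Module.finrank ℝ
          (X ⧸ LinearMap.range
            ((ContinuousLinearMap.fst ℝ X Y).comp
              (LinearMap.ker (Tx.coprod Ty : X × Y →ₗ[ℝ] V)).subtypeL).toLinearMap) =
        Module.finrank ℝ (V ⧸ LinearMap.range (Ty : Y →ₗ[ℝ] V)) := by
  have hrange := LinearMap.range_fst_comp_ker_coprod (Tx : X →ₗ[ℝ] V) (Ty : Y →ₗ[ℝ] V)
  refine ⟨⟨LinearMap.kerFstCompKerCoprodEquiv (Tx : X →ₗ[ℝ] V) (Ty : Y →ₗ[ℝ] V)⟩, hrange, ?_⟩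
  exact ((Submodule.quotEquivOfEq _ _ hrange).trans
    (LinearMap.quotComapRangeEquivOfSurjective hsurj)).finrank_eq

/-- The projection `Π|_M : M → X` on the zero set `M = f⁻¹(0)` is Fredholm of
index zero, stated at a single zero in the linear charts: with `Tx`, `Ty` the
partial derivatives at the zero (so that the total derivative `Tx ⊕ Ty` is
surjective, `Ty` is Fredholm of index zero, and the T condition holds), and
`TM = ker (Tx ⊕ Ty)` the tangent space of `M`, the kernel of
`dΠ|_{TM}` is isomorphic to `ker Ty`, its image equals `Tx⁻¹(Im Ty)`, and the
codimension of this image in `X` equals the codimension of `Im Ty` in `V`. -/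
theorem stmt_16 {X Y V : Type*}
    [NormedAddCommGroup X] [NormedSpace ℝ X] [CompleteSpace X]
    [NormedAddCommGroup Y] [InnerProductSpace ℝ Y] [CompleteSpace Y]
    [NormedAddCommGroup V] [InnerProductSpace ℝ V] [CompleteSpace V]
    (Tx : X →L[ℝ] V) (Ty : Y →L[ℝ] V)
    (hsurj : Function.Surjective (Tx.coprod Ty))
    (hT : (LinearMap.range (Tx : X →ₗ[ℝ] V))ᗮ ⊓ (LinearMap.range (Ty : Y →ₗ[ℝ] V))ᗮ = ⊥)
    (hker : FiniteDimensional ℝ (LinearMap.ker (Ty : Y →ₗ[ℝ] V)))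
    (hcoker : FiniteDimensional ℝ (V ⧸ LinearMap.range (Ty : Y →ₗ[ℝ] V)))
    (hind : Module.finrank ℝ (LinearMap.ker (Ty : Y →ₗ[ℝ] V)) =
      Module.finrank ℝ (V ⧸ LinearMap.range (Ty : Y →ₗ[ℝ] V))) :
    Nonempty
        ((LinearMap.ker
            ((ContinuousLinearMap.fst ℝ X Y).comp
              (LinearMap.ker (Tx.coprod Ty : X × Y →ₗ[ℝ] V)).subtypeL).toLinearMap) ≃ₗ[ℝ]
          LinearMap.ker (Ty : Y →ₗ[ℝ] V)) ∧
      LinearMap.range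
          ((ContinuousLinearMap.fst ℝ X Y).comp
            (LinearMap.ker (Tx.coprod Ty : X × Y →ₗ[ℝ] V)).subtypeL).toLinearMap =
        Submodule.comap (Tx : X →ₗ[ℝ] V) (LinearMap.range (Ty : Y →ₗ[ℝ] V)) ∧
      Module.finrank ℝ
          (X ⧸ LinearMap.range
            ((ContinuousLinearMap.fst ℝ X Y).comp
              (LinearMap.ker (Tx.coprod Ty : X × Y →ₗ[ℝ] V)).subtypeL).toLinearMap) =
        Module.finrank ℝ (V ⧸ LinearMap.range (Ty : Y →ₗ[ℝ] V)) :=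
  stmt_16_general Tx Ty hsurj
end
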